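/- In the ring ℤ[x, y], let I be the ideal generated by (x+y)(x²+y²), x⁴ and y⁴, and let e = 3x² + 2xy + y². Then modulo I: e·x² ≡ x³y − xy³, e·(xy) ≡ x³y − xy³, and e·y² ≡ −3x³y − xy³. -/
import Mathlib


open MvPolynomial

/-- In `ℤ[x, y]` with `I = ((x+y)(x²+y²), x⁴, y⁴)` and `e = 3x² + 2xy + y²`, one has,
modulo `I`: `e·x² ≡ x³y − xy³`, `e·(xy) ≡ x³y − xy³` and `e·y² ≡ −3x³y − xy³`. -/
theorem euler_class_multiplication :
    let x : MvPolynomial (Fin 2) ℤ := X 0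
    let y : MvPolynomial (Fin 2) ℤ := X 1
    let I : Ideal (MvPolynomial (Fin 2) ℤ) :=
      Ideal.span {(x + y) * (x ^ 2 + y ^ 2), x ^ 4, y ^ 4}
    let e : MvPolynomial (Fin 2) ℤ := 3 * x ^ 2 + 2 * x * y + y ^ 2
    Ideal.Quotient.mk I (e * x ^ 2) = Ideal.Quotient.mk I (x ^ 3 * y - x * y ^ 3) ∧
    Ideal.Quotient.mk I (e * (x * y)) = Ideal.Quotient.mk I (x ^ 3 * y - x * y ^ 3) ∧
    Ideal.Quotient.mk I (e * y ^ 2) = Ideal.Quotient.mk I (-(3 * (x ^ 3 * y)) - x * y ^ 3) := by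
  intro x y I e
  have hg : (x + y) * (x ^ 2 + y ^ 2) ∈ I := Ideal.subset_span (by simp)
  have hx4 : x ^ 4 ∈ I := Ideal.subset_span (by simp)
  have hy4 : y ^ 4 ∈ I := Ideal.subset_span (by simp)
  refine ⟨?_, ?_, ?_⟩ <;> rw [Ideal.Quotient.eq]
  · have h : e * x ^ 2 - (x ^ 3 * y - x * y ^ 3)
        = y * ((x + y) * (x ^ 2 + y ^ 2)) + 3 * x ^ 4 + (-1) * y ^ 4 := by ring
    rw [h]
    exact add_mem (add_mem (I.mul_mem_left _ hg) (I.mul_mem_left _ hx4)) (I.mul_mem_left _ hy4)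
  · have h : e * (x * y) - (x ^ 3 * y - x * y ^ 3)
        = (2 * y) * ((x + y) * (x ^ 2 + y ^ 2)) + (-2) * y ^ 4 := by ring
    rw [h]
    exact add_mem (I.mul_mem_left _ hg) (I.mul_mem_left _ hy4)
  · have h : e * y ^ 2 - (-(3 * (x ^ 3 * y)) - x * y ^ 3)
        = (3 * y) * ((x + y) * (x ^ 2 + y ^ 2)) + (-2) * y ^ 4 := by ring
    rw [h]
    exact add_mem (I.mul_mem_left _ hg) (I.mul_mem_left _ hy4)
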